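/- Let D₁ be a p×p and D₂ a q×q real diagonal matrix with nonnegative entries, F a q×p real matrix, and P_Z the orthogonal projector onto the range of Z = [I; F]. Then ‖diag(D₁, D₂) (I − P_Z) diag(D₁, D₂)‖ ≤ ‖F D₁‖² + ‖D₂‖², where ‖·‖ is the spectral norm. -/

import Mathlib

/-!
Write `Q = 1 - P_Z`, an orthogonal projector with `Q Z = 0`. Subtracting from `D` the matrix
`Z [D₁ 0]`, whose columns lie in the range of `Z`, leaves `B = [0 0; -F D₁ D₂]`, so `Q D = Q B`.
Hence `D Q D = (Q B)ᴴ (Q B)` has norm `‖Q B‖² ≤ ‖B‖² = ‖[-F D₁ D₂]‖²`, and for a row of blocks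
`‖[X Y]‖² = ‖X Xᴴ + Y Yᴴ‖ ≤ ‖X‖² + ‖Y‖²`.
-/

open Matrix

/-- Spectral (operator `ℓ²→ℓ²`) norm of a real matrix. -/
noncomputable def specNorm {m n : Type*} [Fintype m] [Fintype n] [DecidableEq n]
    (A : Matrix m n ℝ) : ℝ :=
  ‖LinearMap.toContinuousLinearMap (Matrix.toEuclideanLin A)‖

open scoped Matrix.Norms.L2Operator

lemma specNorm_eq_l2_opNorm {m n : Type*} [Fintype m] [Fintype n] [DecidableEq n]
    (A : Matrix m n ℝ) : specNorm A = ‖A‖ :=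
  rfl

namespace Matrix

section L2OpNorm

variable {𝕜 : Type*} [RCLike 𝕜] {m n m₁ m₂ n₁ n₂ : Type*} [Fintype m] [Fintype n]
  [Fintype m₁] [Fintype m₂] [Fintype n₁] [Fintype n₂] [DecidableEq n]

lemma l2_opNorm_mul_conjTranspose_self [DecidableEq m] (A : Matrix m n 𝕜) :
    ‖A * Aᴴ‖ = ‖A‖ * ‖A‖ := by
  simpa [l2_opNorm_conjTranspose] using l2_opNorm_conjTranspose_mul_self Aᴴ

lemma l2_opNorm_fromRows_zero_left (C : Matrix m₂ n 𝕜) :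
    ‖fromRows (0 : Matrix m₁ n 𝕜) C‖ = ‖C‖ := by
  refine (mul_self_inj (norm_nonneg _) (norm_nonneg _)).mp ?_
  rw [← l2_opNorm_conjTranspose_mul_self, ← l2_opNorm_conjTranspose_mul_self,
    conjTranspose_fromRows_eq_fromCols_conjTranspose, fromCols_mul_fromRows,
    conjTranspose_zero, Matrix.zero_mul, zero_add]

lemma l2_opNorm_fromCols_sq_le [DecidableEq m] [DecidableEq n₁] [DecidableEq n₂]
    (X : Matrix m n₁ 𝕜) (Y : Matrix m n₂ 𝕜) :
    ‖fromCols X Y‖ ^ 2 ≤ ‖X‖ ^ 2 + ‖Y‖ ^ 2 :=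
  calc ‖fromCols X Y‖ ^ 2 = ‖X * Xᴴ + Y * Yᴴ‖ := by
        rw [sq, ← l2_opNorm_mul_conjTranspose_self,
          conjTranspose_fromCols_eq_fromRows_conjTranspose, fromCols_mul_fromRows]
    _ ≤ ‖X * Xᴴ‖ + ‖Y * Yᴴ‖ := norm_add_le _ _
    _ = ‖X‖ ^ 2 + ‖Y‖ ^ 2 := by
        rw [l2_opNorm_mul_conjTranspose_self, l2_opNorm_mul_conjTranspose_self, sq, sq]

lemma _root_.IsStarProjection.l2_opNorm_mul_le [DecidableEq m] {Q : Matrix n n 𝕜}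
    (hQ : IsStarProjection Q) (B : Matrix n m 𝕜) : ‖Q * B‖ ≤ ‖B‖ :=
  (l2_opNorm_mul Q B).trans <| mul_le_of_le_one_left (norm_nonneg B) (hQ.norm_le Q)

end L2OpNorm

lemma mul_eq_self_of_range_mulVecLin_le {R : Type*} [CommSemiring R] {n m : Type*} [Fintype n]
    [Fintype m] [DecidableEq m] {P : Matrix n n R} (hP : IsIdempotentElem P) {Z : Matrix n m R}
    (hZ : LinearMap.range Z.mulVecLin ≤ LinearMap.range P.mulVecLin) : P * Z = Z := by
  refine ext_of_mulVec_single fun j => ?_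
  obtain ⟨x, hx⟩ := hZ ⟨Pi.single j 1, rfl⟩
  rw [← mulVec_mulVec, ← show P *ᵥ x = Z *ᵥ Pi.single j 1 from hx, mulVec_mulVec, hP.eq]

end Matrix

theorem conjugated_complementary_projector_norm_bound_general {p q : ℕ}
    (d₁ : Fin p → ℝ) (d₂ : Fin q → ℝ)
    (F : Matrix (Fin q) (Fin p) ℝ)
    (Z : Matrix (Fin p ⊕ Fin q) (Fin p) ℝ)
    (hZ : Z = Matrix.fromRows (1 : Matrix (Fin p) (Fin p) ℝ) F)
    (PZ : Matrix (Fin p ⊕ Fin q) (Fin p ⊕ Fin q) ℝ)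
    (hPZsym : PZᵀ = PZ) (hPZidem : PZ * PZ = PZ)
    (hPZrange : LinearMap.range PZ.mulVecLin = LinearMap.range Z.mulVecLin)
    (D : Matrix (Fin p ⊕ Fin q) (Fin p ⊕ Fin q) ℝ)
    (hD : D = Matrix.fromBlocks (diagonal d₁) 0 0 (diagonal d₂)) :
    specNorm (D * (1 - PZ) * D) ≤
      specNorm (F * diagonal d₁) ^ 2 + specNorm (diagonal d₂) ^ 2 := by
  have hP : IsStarProjection PZ :=
    ⟨hPZidem, by rwa [IsSelfAdjoint, star_eq_conjTranspose, conjTranspose_eq_transpose_of_trivial]⟩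
  set Q := 1 - PZ
  have hQ : IsStarProjection Q := hP.one_sub
  have hQZ : Q * Z = 0 := by
    rw [Matrix.sub_mul, Matrix.one_mul, mul_eq_self_of_range_mulVecLin_le hPZidem hPZrange.ge,
      sub_self]
  set B := fromRows (0 : Matrix (Fin p) _ ℝ) (fromCols (-(F * diagonal d₁)) (diagonal d₂))
  have hDB : D = Z * fromCols (diagonal d₁) 0 + B := by
    subst hD hZ
    ext (i | i) (j | j) <;> simp [B]
  have hQD : Q * D = Q * B := by
    rw [hDB, Matrix.mul_add, ← Matrix.mul_assoc, hQZ, Matrix.zero_mul, zero_add]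
  have hDsymm : Dᴴ = D := by
    simp [hD, conjTranspose_eq_transpose_of_trivial]
  have hDQD : (Q * B)ᴴ * (Q * B) = D * Q * D := by
    rw [← hQD, conjTranspose_mul, hDsymm, ← star_eq_conjTranspose, hQ.isSelfAdjoint.star_eq,
      ← Matrix.mul_assoc, Matrix.mul_assoc D, hQ.isIdempotentElem.eq]
  simp only [specNorm_eq_l2_opNorm]
  calc ‖D * Q * D‖ = ‖Q * B‖ * ‖Q * B‖ := by rw [← hDQD, l2_opNorm_conjTranspose_mul_self]
    _ ≤ ‖B‖ * ‖B‖ := mul_self_le_mul_self (norm_nonneg _) (hQ.l2_opNorm_mul_le B)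
    _ ≤ ‖F * diagonal d₁‖ ^ 2 + ‖diagonal d₂‖ ^ 2 := by
        rw [l2_opNorm_fromRows_zero_left, ← sq, ← norm_neg (F * diagonal d₁)]
        exact l2_opNorm_fromCols_sq_le _ _

theorem conjugated_complementary_projector_norm_bound {p q : ℕ}
    (d₁ : Fin p → ℝ) (d₂ : Fin q → ℝ)
    (hd₁ : ∀ i, 0 ≤ d₁ i) (hd₂ : ∀ i, 0 ≤ d₂ i)
    (F : Matrix (Fin q) (Fin p) ℝ)
    (Z : Matrix (Fin p ⊕ Fin q) (Fin p) ℝ)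
    (hZ : Z = Matrix.fromRows (1 : Matrix (Fin p) (Fin p) ℝ) F)
    (PZ : Matrix (Fin p ⊕ Fin q) (Fin p ⊕ Fin q) ℝ)
    (hPZsym : PZᵀ = PZ) (hPZidem : PZ * PZ = PZ)
    (hPZrange : LinearMap.range PZ.mulVecLin = LinearMap.range Z.mulVecLin)
    (D : Matrix (Fin p ⊕ Fin q) (Fin p ⊕ Fin q) ℝ)
    (hD : D = Matrix.fromBlocks (diagonal d₁) 0 0 (diagonal d₂)) :
    specNorm (D * (1 - PZ) * D) ≤
      specNorm (F * diagonal d₁) ^ 2 + specNorm (diagonal d₂) ^ 2 :=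
  conjugated_complementary_projector_norm_bound_general d₁ d₂ F Z hZ PZ hPZsym hPZidem hPZrange D hD
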